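/- Let Γ be a finite extensive-form game with perfect recall, let i ∈ N, and let π^i = ⟨ϖ_1^i, …, ϖ_{κ_i(∅)}^i⟩ be an admissible ordering of player i's sequences. If two realization plans γ^i, γ̃^i ∈ Λ^i satisfy γ^i(ϖ_l^i) = γ̃^i(ϖ_l^i) for every l ∈ K_i, then γ^i = γ̃^i. In other words, specifying realization probabilities only for the κ_i(∅) sequences in π^i uniquely determines the entire realization plan via the flow constraints. -/

import Mathlib

open Filter

attribute [local instance] Classical.propDecidable

noncomputable section

/-- Abstract presentation of the sequence form (together with the reduced normal form)
of a finite extensive-form game with perfect recall.  A sequence of a player is the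
finite set of actions this player takes along some history, so sequences are modelled
as finite sets of actions; information sets of player `i` are indexed by `M i`;
the chance player has been folded into the payoff function `gSeq` on sequence profiles;
`S i` is the finite set of reduced-normal-form pure strategies of player `i`. -/
structure SeqFormGame (N : Type) [Fintype N] [DecidableEq N]
    (Act : Type) [DecidableEq Act]
    (M : N → Type) [∀ i, Fintype (M i)] [∀ i, DecidableEq (M i)]
    (S : N → Type) [∀ i, Fintype (S i)] [∀ i, DecidableEq (S i)] where
  /-- actions available at information set `j` of player `i` -/
  A : ∀ i : N, M i → Finset Act
  A_nonempty : ∀ i j, (A i j).Nonempty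
  /-- the sequence `ϖ_{I_i^j}` of player `i` leading to information set `j` -/
  seqI : ∀ i : N, M i → Finset Act
  /-- the set `W^i` of sequences of player `i` -/
  W : N → Finset (Finset Act)
  empty_mem_W : ∀ i, ∅ ∈ W i
  seqI_mem_W : ∀ i j, seqI i j ∈ W i
  ext_mem_W : ∀ i j, ∀ a ∈ A i j, insert a (seqI i j) ∈ W i
  not_mem_seqI : ∀ i j, ∀ a ∈ A i j, a ∉ seqI i j
  /-- every nonempty sequence is an extension `ϖ_{I_i^j} a` of the sequence leading
  to some information set -/
  W_struct : ∀ i, ∀ w ∈ W i, w ≠ ∅ → ∃ j, ∃ a ∈ A i j, w = insert a (seqI i j)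
  ext_inj : ∀ i j j' a a', a ∈ A i j → a' ∈ A i j' →
    insert a (seqI i j) = insert a' (seqI i j') → j = j' ∧ a = a'
  /-- payoff of player `i` on a profile of sequences (chance averaged out using the
  fixed realization plan of the chance player) -/
  gSeq : N → ((q : N) → Finset Act) → ℝ
  /-- `plays i s w` means `s^i(w) = 1`, i.e. the reduced-normal-form pure strategy
  `s` of player `i` chooses every action of the sequence `w` -/
  plays : ∀ i : N, S i → Finset Act → Prop
  plays_empty : ∀ i s, plays i s ∅
  plays_mono : ∀ i s, ∀ w ∈ W i, ∀ w' ∈ W i, w' ⊆ w → plays i s w → plays i s w'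
  exists_plays : ∀ i, ∀ w ∈ W i, ∃ s, plays i s w
  /-- the 0/1 indicator `w ↦ s^i(w)` of a pure strategy satisfies the flow
  constraints of realization plans -/
  plays_flow : ∀ i s (j : M i),
    (∑ a ∈ A i j, (if plays i s (insert a (seqI i j)) then (1 : ℝ) else 0)) =
      (if plays i s (seqI i j) then (1 : ℝ) else 0)
  /-- payoff of player `i` on a profile of reduced-normal-form pure strategies -/
  uP : N → ((q : N) → S q) → ℝ
  /-- the normal-form payoff of a pure-strategy profile coincides with the
  sequence-form payoff of the induced (0/1) realization plans -/
  uP_eq : ∀ i s, uP i s =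
    ∑ w ∈ Fintype.piFinset W,
      (∏ q, (if plays q (s q) (w q) then (1 : ℝ) else 0)) * gSeq i w

namespace SeqFormGame

variable {N : Type} [Fintype N] [DecidableEq N]
  {Act : Type} [DecidableEq Act]
  {M : N → Type} [∀ i, Fintype (M i)] [∀ i, DecidableEq (M i)]
  {S : N → Type} [∀ i, Fintype (S i)] [∀ i, DecidableEq (S i)]
  (G : SeqFormGame N Act M S)

/-- the extended sequence `ϖ_{I_i^j} a` -/
def ext (i : N) (j : M i) (a : Act) : Finset Act := insert a (G.seqI i j)

/-- `γi` is a realization plan of player `i` (`γi ∈ Λ^i`) -/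
def IsRP (i : N) (γi : Finset Act → ℝ) : Prop :=
  γi ∅ = 1 ∧ (∀ w ∈ G.W i, 0 ≤ γi w) ∧
    ∀ j : M i, (∑ a ∈ G.A i j, γi (G.ext i j a)) = γi (G.seqI i j)

/-- `γ` is a realization-plan profile (`γ ∈ Λ`) -/
def IsRPP (γ : ∀ _ : N, Finset Act → ℝ) : Prop := ∀ i, G.IsRP i (γ i)

/-- the finite set of sequence profiles -/
def seqProfiles : Finset ((q : N) → Finset Act) := Fintype.piFinset G.W

/-- `g^i(ϖ^i, γ^{-i})` -/
def gE (i : N) (wi : Finset Act) (γ : ∀ _ : N, Finset Act → ℝ) : ℝ :=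
  ∑ w ∈ G.seqProfiles,
    if w i = wi then (∏ q ∈ Finset.univ.erase i, γ q (w q)) * G.gSeq i w else 0

/-- `g^i(γ)` -/
def gVal (i : N) (γ : ∀ _ : N, Finset Act → ℝ) : ℝ :=
  ∑ wi ∈ G.W i, γ i wi * G.gE i wi γ

/-- `g^i(γ; ϖ^i)`, the expected payoff led by the sequence `ϖ^i` -/
def gCond (i : N) (γ : ∀ _ : N, Finset Act → ℝ) (w : Finset Act) : ℝ :=
  ∑ w' ∈ (G.W i).filter (fun w' => w ⊆ w'), γ i w' * G.gE i w' γ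

/-- `g_m^i(ϖ^i, γ^{-i})`, the maximal expected payoff attainable while committing
to the sequence `ϖ^i` -/
def gm (i : N) (w : Finset Act) (γ : ∀ _ : N, Finset Act → ℝ) : ℝ :=
  sSup {x | ∃ γi', G.IsRP i γi' ∧ γi' w = 1 ∧
    x = G.gVal i (Function.update γ i γi')}

/-- `ϖ_{I_i^j} a` is an `I_i^j`-best-response sequence to `γ` -/
def IsBRAt (γ : ∀ _ : N, Finset Act → ℝ) (i : N) (j : M i) (a : Act) : Prop :=
  ∀ a' ∈ G.A i j,
    sSup {x | ∃ γi', G.IsRP i γi' ∧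
        x = G.gCond i (Function.update γ i γi') (G.ext i j a')} ≤
      sSup {x | ∃ γi', G.IsRP i γi' ∧
        x = G.gCond i (Function.update γ i γi') (G.ext i j a)}

/-- `ϖ^i` is a best-response sequence to `γ` -/
def IsBRSeq (γ : ∀ _ : N, Finset Act → ℝ) (i : N) (w : Finset Act) : Prop :=
  ∀ (j : M i) (a : Act), a ∈ G.A i j → a ∈ w → G.IsBRAt γ i j a

/-- `s^i(ϖ^i)` as a 0/1 real number -/
def sInd (i : N) (s : S i) (w : Finset Act) : ℝ := if G.plays i s w then 1 else 0

/-- `σi` is a mixed strategy of player `i` (`σi ∈ Ξ^i`) -/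
def IsMixed (_G : SeqFormGame N Act M S) (i : N) (σi : S i → ℝ) : Prop := (∀ s, 0 ≤ σi s) ∧ (∑ s, σi s) = 1

/-- `σ` is a mixed-strategy profile (`σ ∈ Ξ`) -/
def IsMixedProfile (σ : ∀ i : N, S i → ℝ) : Prop := ∀ i, G.IsMixed i (σ i)

/-- the finite set of pure-strategy profiles -/
def pureProfiles (_G : SeqFormGame N Act M S) : Finset ((q : N) → S q) :=
  Fintype.piFinset fun _ => (Finset.univ : Finset _)

/-- expected payoff `u^i(σ)` of a mixed-strategy profile -/
def uMix (i : N) (σ : ∀ q : N, S q → ℝ) : ℝ :=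
  ∑ s ∈ G.pureProfiles, (∏ q, σ q (s q)) * G.uP i s

/-- the mixed strategy putting all weight on the pure strategy `si` -/
def pureMix (_G : SeqFormGame N Act M S) (i : N) (si : S i) : S i → ℝ := fun s => if s = si then 1 else 0

/-- `u^i(s^i, σ^{-i})` -/
def uAgainst (i : N) (si : S i) (σ : ∀ q : N, S q → ℝ) : ℝ :=
  G.uMix i (Function.update σ i (G.pureMix i si))

/-- the realization-plan profile `γ(σ)` induced by a mixed-strategy profile:
`γ^i(σ^i; ϖ^i) = Σ_{s^i} s^i(ϖ^i) σ^i(s^i)` -/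
def inducedRP (σ : ∀ i : N, S i → ℝ) : ∀ _ : N, Finset Act → ℝ :=
  fun i w => ∑ s : S i, G.sInd i s w * σ i s

/-- `σ*` is a Nash equilibrium: every pure strategy that is not a best response
gets probability zero -/
def IsNashNF (σ : ∀ i : N, S i → ℝ) : Prop :=
  ∀ i (s : S i), (∃ s' : S i, G.uAgainst i s σ < G.uAgainst i s' σ) → σ i s = 0

/-- totally mixed strategy profile -/
def IsTotallyMixed (σ : ∀ i : N, S i → ℝ) : Prop :=
  G.IsMixedProfile σ ∧ ∀ i s, 0 < σ i s

/-- `ε`-normal-form proper equilibrium -/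
def IsEpsProperNF (ε : ℝ) (σ : ∀ i : N, S i → ℝ) : Prop :=
  G.IsTotallyMixed σ ∧
    ∀ i (s s' : S i), G.uAgainst i s σ < G.uAgainst i s' σ → σ i s ≤ ε * σ i s'

/-- normal-form proper equilibrium: a limit point of `ε^k`-normal-form proper
equilibria with `ε^k → 0` -/
def IsProperNF (σ : ∀ i : N, S i → ℝ) : Prop :=
  ∃ (εs : ℕ → ℝ) (σs : ℕ → ∀ i : N, S i → ℝ),
    (∀ k, 0 < εs k ∧ G.IsEpsProperNF (εs k) (σs k)) ∧
    Tendsto εs atTop (nhds 0) ∧ MapClusterPt σ atTop σs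

/-- `ε`-normal-form perfect equilibrium -/
def IsEpsPerfectNF (ε : ℝ) (σ : ∀ i : N, S i → ℝ) : Prop :=
  G.IsTotallyMixed σ ∧
    ∀ i (s s' : S i), G.uAgainst i s σ < G.uAgainst i s' σ → σ i s ≤ ε

/-- normal-form perfect equilibrium -/
def IsPerfectNF (σ : ∀ i : N, S i → ℝ) : Prop :=
  ∃ (εs : ℕ → ℝ) (σs : ℕ → ∀ i : N, S i → ℝ),
    (∀ k, 0 < εs k ∧ G.IsEpsPerfectNF (εs k) (σs k)) ∧
    Tendsto εs atTop (nhds 0) ∧ MapClusterPt σ atTop σs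

/-- totally positive realization-plan profile -/
def IsTotallyPos (γ : ∀ _ : N, Finset Act → ℝ) : Prop :=
  G.IsRPP γ ∧ ∀ i, ∀ w ∈ G.W i, 0 < γ i w

/-- `ε`-sequence-form proper equilibrium (payoff-ordering condition) -/
def IsEpsProperSF (ε : ℝ) (γ : ∀ _ : N, Finset Act → ℝ) : Prop :=
  G.IsTotallyPos γ ∧
    ∀ i, ∀ w ∈ G.W i, ∀ w' ∈ G.W i,
      G.gm i w γ < G.gm i w' γ → γ i w ≤ ε * γ i w'

/-- sequence-form proper equilibrium: a limit point of `ε^k`-sequence-form proper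
equilibria with `ε^k → 0` -/
def IsProperSF (γ : ∀ _ : N, Finset Act → ℝ) : Prop :=
  ∃ (εs : ℕ → ℝ) (γs : ℕ → ∀ _ : N, Finset Act → ℝ),
    (∀ k, 0 < εs k ∧ G.IsEpsProperSF (εs k) (γs k)) ∧
    Tendsto εs atTop (nhds 0) ∧ MapClusterPt γ atTop γs

/-- `ε`-sequence-form perfect equilibrium -/
def IsEpsPerfectSF (ε : ℝ) (γ : ∀ _ : N, Finset Act → ℝ) : Prop :=
  G.IsTotallyPos γ ∧
    ∀ i, ∀ w ∈ G.W i, ∀ w' ∈ G.W i, G.gm i w γ < G.gm i w' γ → γ i w ≤ ε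

/-- sequence-form perfect equilibrium -/
def IsPerfectSF (γ : ∀ _ : N, Finset Act → ℝ) : Prop :=
  ∃ (εs : ℕ → ℝ) (γs : ℕ → ∀ _ : N, Finset Act → ℝ),
    (∀ k, 0 < εs k ∧ G.IsEpsPerfectSF (εs k) (γs k)) ∧
    Tendsto εs atTop (nhds 0) ∧ MapClusterPt γ atTop γs

/-- `M_i(ϖ^i)`: the information sets of player `i` reachable with `ϖ^i` -/
def Mreach (i : N) (w : Finset Act) : Finset (M i) :=
  Finset.univ.filter fun j => w ⊆ G.seqI i j

/-- `κ_i(ϖ^i) = Σ_{j ∈ M_i(ϖ^i)} (|A(I_i^j)| − 1) + 1` -/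
def kappa (i : N) (w : Finset Act) : ℕ :=
  (∑ j ∈ G.Mreach i w, ((G.A i j).card - 1)) + 1

/-- `δ` is a perturbation vector `δ(ε)`: `0 < δ_l^i(ε) ≤ ε` for `l ∈ K_i` -/
def IsPert (ε : ℝ) (δ : N → ℕ → ℝ) : Prop :=
  ∀ i, ∀ l ∈ Finset.Icc 1 (G.kappa i ∅), 0 < δ i l ∧ δ i l ≤ ε

/-- `r_l^i(δ(ε)) = Π_{q=1}^{κ_i(∅) − l} δ_q^i(ε)` -/
def rpert (δ : N → ℕ → ℝ) (i : N) (l : ℕ) : ℝ :=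
  ∏ q ∈ Finset.Icc 1 (G.kappa i ∅ - l), δ i q

/-- the collection `𝓔^i` of admissible sets of sequences -/
def Ecoll (i : N) : Finset (Finset (Finset Act)) :=
  ((G.W i).powerset).filter fun E => E.Nonempty ∧
    (∀ j : M i, ¬ ((G.A i j).image fun a => G.ext i j a) ⊆ E) ∧
    ∀ w ∈ E, ∀ w' ∈ E, w ⊆ w' → w = w'

/-- `q^i(E^i) = Σ_{ϖ^i ∈ E^i} κ_i(ϖ^i)` -/
def qE (i : N) (E : Finset (Finset Act)) : ℕ := ∑ w ∈ E, G.kappa i w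

/-- membership in the perturbed strategy space `Λ^i(δ(ε))` -/
def memPert (i : N) (δ : N → ℕ → ℝ) (γi : Finset Act → ℝ) : Prop :=
  G.IsRP i γi ∧ ∀ E ∈ G.Ecoll i,
    (∑ q ∈ Finset.Icc 1 (G.qE i E), G.rpert δ i q) ≤ ∑ w ∈ E, γi w

/-- Nash equilibrium of the perturbed sequence-form game `Γ_s(δ(ε))` -/
def IsNashPert (δ : N → ℕ → ℝ) (γ : ∀ _ : N, Finset Act → ℝ) : Prop :=
  (∀ i, G.memPert i δ (γ i)) ∧
    ∀ i, ∀ γi', G.memPert i δ γi' →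
      G.gVal i (Function.update γ i γi') ≤ G.gVal i γ

/-- sequence-form proper equilibrium in the perturbed-game sense: a limit point of
Nash equilibria of perturbed games `Γ_s(δ(ε^k))` with `ε^k → 0` -/
def IsProperSFPert (γ : ∀ _ : N, Finset Act → ℝ) : Prop :=
  ∃ (εs : ℕ → ℝ) (γs : ℕ → ∀ _ : N, Finset Act → ℝ) (δs : ℕ → N → ℕ → ℝ),
    (∀ k, 0 < εs k ∧ G.IsPert (εs k) (δs k) ∧ G.IsNashPert (δs k) (γs k)) ∧
    Tendsto εs atTop (nhds 0) ∧ MapClusterPt γ atTop γs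

/-- `π` is an ordering `π^i(γ^i)` constructed from `γ^i`: for each information set
one sequence with maximal realization weight is removed, and the remaining extended
sequences are listed in ascending order of their `γ^i`-values, with `∅` last -/
def IsPiOrdering (i : N) (γi : Finset Act → ℝ) (π : List (Finset Act)) : Prop :=
  π.length = G.kappa i ∅ ∧ π.Nodup ∧ π.getLast? = some ∅ ∧
  π.dropLast.Pairwise (fun w w' => γi w ≤ γi w') ∧
  ∃ choice : M i → Act,
    (∀ j, choice j ∈ G.A i j ∧
      ∀ a ∈ G.A i j, γi (G.ext i j a) ≤ γi (G.ext i j (choice j))) ∧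
    ∀ w, w ∈ π.dropLast ↔ ∃ j, ∃ a ∈ G.A i j, a ≠ choice j ∧ w = G.ext i j a

/-- the `l`-th reduced subset `π_l^i` of an ordering `π`: the members of the first
`l` entries of `π` that contain no other such entry as a proper subset -/
def reducedSubset (π : List (Finset Act)) (l : ℕ) : Finset (Finset Act) :=
  (π.take l).toFinset.filter fun w => ∀ w' ∈ (π.take l).toFinset, ¬ w' ⊂ w

/-- an admissible ordering of player `i`'s sequences -/
def IsAdmissibleOrdering (i : N) (π : List (Finset Act)) : Prop :=
  π.length = G.kappa i ∅ ∧ π.Nodup ∧ (∀ w ∈ π, w ∈ G.W i) ∧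
  (∀ j : M i, ((G.A i j).filter fun a => G.ext i j a ∈ π).card =
    (G.A i j).card - 1) ∧
  ∀ l l' : ℕ, l < l' → l' < π.length → ¬ π.getD l' ∅ ⊆ π.getD l ∅


/-- **Theorem (Statement 14).** Specifying realization probabilities only for the
`κ_i(∅)` sequences of an admissible ordering `π^i` uniquely determines the entire
realization plan via the flow constraints. -/
theorem rp_determined_by_ordering
    (i : N) (π : List (Finset Act)) (hπ : G.IsAdmissibleOrdering i π)
    (γi γi' : Finset Act → ℝ) (h1 : G.IsRP i γi) (h2 : G.IsRP i γi')
    (h : ∀ w ∈ π, γi w = γi' w) :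
    ∀ w ∈ G.W i, γi w = γi' w := by
  have main : ∀ n : ℕ, ∀ w ∈ G.W i, w.card ≤ n → γi w = γi' w := by
    intro n
    induction n with
    | zero =>
      intro w _ hc
      have hwe : w = ∅ := Finset.card_eq_zero.mp (Nat.le_zero.mp hc)
      subst hwe; rw [h1.1, h2.1]
    | succ n IH =>
      intro w hw hc
      by_cases hwπ : w ∈ π
      · exact h w hwπ
      by_cases hwe : w = ∅
      · subst hwe; rw [h1.1, h2.1]
      obtain ⟨j, a, ha, rfl⟩ := G.W_struct i w hw hwe
      have hseqcard : (G.seqI i j).card ≤ n := by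
        have := Finset.card_insert_of_notMem (G.not_mem_seqI i j a ha)
        omega
      have hIseq : γi (G.seqI i j) = γi' (G.seqI i j) :=
        IH _ (G.seqI_mem_W i j) hseqcard
      have hothers : ∀ a' ∈ G.A i j, a' ≠ a → G.ext i j a' ∈ π := by
        intro a' ha' hne
        by_contra hne'
        have hcard := hπ.2.2.2.1 j
        have hsub : (G.A i j).filter (fun b => G.ext i j b ∈ π) ⊆
            ((G.A i j).erase a').erase a := by
          intro b hb
          simp only [Finset.mem_filter] at hb
          refine Finset.mem_erase.mpr ⟨?_, Finset.mem_erase.mpr ⟨?_, hb.1⟩⟩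
          · rintro rfl; exact hwπ hb.2
          · rintro rfl; exact hne' hb.2
        have h1c := Finset.card_le_card hsub
        have hae : a ∈ (G.A i j).erase a' := Finset.mem_erase.mpr ⟨hne.symm, ha⟩
        have hpos : 0 < ((G.A i j).erase a').card := Finset.card_pos.mpr ⟨a, hae⟩
        rw [Finset.card_erase_of_mem hae, Finset.card_erase_of_mem ha'] at h1c
        rw [Finset.card_erase_of_mem ha'] at hpos
        omega
      have hf1 := h1.2.2 j
      have hf2 := h2.2.2 j
      rw [← Finset.add_sum_erase _ _ ha] at hf1 hf2
      have hsum : ∑ a' ∈ (G.A i j).erase a, γi (G.ext i j a') =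
          ∑ a' ∈ (G.A i j).erase a, γi' (G.ext i j a') := by
        refine Finset.sum_congr rfl fun a' ha' => ?_
        obtain ⟨hne, hmem⟩ := Finset.mem_erase.mp ha'
        exact h _ (hothers a' hmem hne)
      have : γi (G.ext i j a) = γi' (G.ext i j a) := by
        rw [hIseq] at hf1; rw [hsum] at hf1; linarith
      exact this
  intro w hw
  exact main w.card w hw le_rfl

end SeqFormGame
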